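/- arXiv:math/0405546 — 2 statements merged into one kernel-verified Lean document; each statement's English description precedes it below -/
import Mathlib

section
/- Let Ω ⊆ ℝⁿ be a nonempty open set and let f = (f̲, f̄) and g = (g̲, ḡ) be Hausdorff-continuous interval-valued functions on Ω. If D ⊆ Ω is dense in Ω and f̲(x) ≤ g̲(x) for every x ∈ D, then f ≤ g on all of Ω, i.e. f̲(x) ≤ g̲(x) and f̄(x) ≤ ḡ(x) for every x ∈ Ω. -/
open Filter Topology

/-- The lower Baire operator: `I(g)(x)` is the sup over neighbourhoods `V` of `x`
of the inf of `g` over `V`. -/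
noncomputable def lowerBaire {X : Type*} [TopologicalSpace X] (g : X → EReal) (x : X) : EReal :=
  ⨆ V ∈ nhds x, ⨅ y ∈ V, g y

/-- The upper Baire operator: `S(g)(x)` is the inf over neighbourhoods `V` of `x`
of the sup of `g` over `V`. -/
noncomputable def upperBaire {X : Type*} [TopologicalSpace X] (g : X → EReal) (x : X) : EReal :=
  ⨅ V ∈ nhds x, ⨆ y ∈ V, g y

/-- The pair `(lo, hi)` is an interval-valued function (`lo ≤ hi` pointwise) which is
segment-continuous: `I(lo) = lo` and `S(hi) = hi`. -/
def IsSCont {X : Type*} [TopologicalSpace X] (lo hi : X → EReal) : Prop :=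
  (∀ x, lo x ≤ hi x) ∧ lowerBaire lo = lo ∧ upperBaire hi = hi

/-- The pair `(lo, hi)` is a Hausdorff-continuous interval-valued function: it is
s-continuous and minimal among s-continuous interval-valued functions `(glo, ghi)`
contained in it pointwise. -/
def IsHCont {X : Type*} [TopologicalSpace X] (lo hi : X → EReal) : Prop :=
  IsSCont lo hi ∧
    ∀ glo ghi : X → EReal, IsSCont glo ghi →
      (∀ x, lo x ≤ glo x) → (∀ x, ghi x ≤ hi x) → glo = lo ∧ ghi = hi

section Aux

variable {X : Type*} [TopologicalSpace X]

lemma lowerBaire_mono' {g h : X → EReal} (hgh : ∀ x, g x ≤ h x) (x : X) :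
    lowerBaire g x ≤ lowerBaire h x :=
  iSup₂_mono fun V _ => iInf₂_mono fun y _ => hgh y

lemma upperBaire_mono' {g h : X → EReal} (hgh : ∀ x, g x ≤ h x) (x : X) :
    upperBaire g x ≤ upperBaire h x :=
  iInf₂_mono fun V _ => iSup₂_mono fun y _ => hgh y

lemma le_upperBaire' (g : X → EReal) (x : X) : g x ≤ upperBaire g x :=
  le_iInf₂ fun V hV => le_iSup₂_of_le x (mem_of_mem_nhds hV) le_rfl

lemma lowerBaire_le' (g : X → EReal) (x : X) : lowerBaire g x ≤ g x :=
  iSup₂_le fun V hV => iInf₂_le_of_le x (mem_of_mem_nhds hV) le_rfl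

lemma upperBaire_idem (g : X → EReal) : upperBaire (upperBaire g) = upperBaire g := by
  funext x
  refine le_antisymm ?_ (le_upperBaire' _ x)
  refine le_iInf₂ fun V hV => ?_
  obtain ⟨U, hUV, hUo, hxU⟩ := mem_nhds_iff.mp hV
  calc upperBaire (upperBaire g) x
      ≤ ⨆ y ∈ U, upperBaire g y := iInf₂_le U (hUo.mem_nhds hxU)
    _ ≤ ⨆ y ∈ V, g y := by
        refine iSup₂_le fun y hy => ?_
        exact iInf₂_le V (mem_nhds_iff.mpr ⟨U, hUV, hUo, hy⟩)

lemma lowerBaire_idem (g : X → EReal) : lowerBaire (lowerBaire g) = lowerBaire g := by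
  funext x
  refine le_antisymm (lowerBaire_le' _ x) ?_
  refine iSup₂_le fun V hV => ?_
  obtain ⟨U, hUV, hUo, hxU⟩ := mem_nhds_iff.mp hV
  calc ⨅ y ∈ V, g y
      ≤ ⨅ y ∈ U, lowerBaire g y := by
        refine le_iInf₂ fun y hy => ?_
        exact le_iSup₂ (f := fun V (_ : V ∈ nhds y) => ⨅ z ∈ V, g z) V
          (mem_nhds_iff.mpr ⟨U, hUV, hUo, hy⟩)
    _ ≤ lowerBaire (lowerBaire g) x :=
        le_iSup₂ (f := fun V (_ : V ∈ nhds x) => ⨅ z ∈ V, lowerBaire g z) U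
          (hUo.mem_nhds hxU)

lemma IsHCont.upperBaire_lo {lo hi : X → EReal} (h : IsHCont lo hi) :
    upperBaire lo = hi := by
  obtain ⟨⟨hle, hI, hS⟩, hmin⟩ := h
  have hs : IsSCont lo (upperBaire lo) := ⟨le_upperBaire' lo, hI, upperBaire_idem lo⟩
  have h2 : ∀ x, upperBaire lo x ≤ hi x := fun x =>
    (upperBaire_mono' hle x).trans_eq (congrFun hS x)
  exact (hmin lo (upperBaire lo) hs (fun _ => le_rfl) h2).2

lemma IsHCont.lowerBaire_hi {lo hi : X → EReal} (h : IsHCont lo hi) :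
    lowerBaire hi = lo := by
  obtain ⟨⟨hle, hI, hS⟩, hmin⟩ := h
  have hs : IsSCont (lowerBaire hi) hi := ⟨lowerBaire_le' hi, lowerBaire_idem hi, hS⟩
  have h1 : ∀ x, lo x ≤ lowerBaire hi x := fun x =>
    (congrFun hI x).symm.trans_le (lowerBaire_mono' hle x)
  exact (hmin (lowerBaire hi) hi hs h1 (fun _ => le_rfl)).1

end Aux

/-- Theorem A1 a): if two Hausdorff-continuous interval-valued functions on a nonempty
open set Ω ⊆ ℝⁿ satisfy f̲ ≤ g̲ on a dense subset, then f ≤ g on all of Ω. -/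
theorem hcont_le_of_lower_le_on_dense {n : ℕ} (Ω : Set (Fin n → ℝ))
    (hΩ : IsOpen Ω) (hne : Ω.Nonempty)
    (flo fhi glo ghi : ↥Ω → EReal)
    (hf : IsHCont flo fhi) (hg : IsHCont glo ghi)
    (D : Set ↥Ω) (hD : Dense D)
    (h : ∀ x ∈ D, flo x ≤ glo x) :
    ∀ x : ↥Ω, flo x ≤ glo x ∧ fhi x ≤ ghi x := by
  have hfI : lowerBaire flo = flo := hf.1.2.1
  -- Step 1: fhi ≤ ghi everywhere.
  have hhi : ∀ x, fhi x ≤ ghi x := by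
    intro x
    rw [← hf.upperBaire_lo, ← hg.upperBaire_lo]
    refine le_iInf₂ fun V hV => ?_
    obtain ⟨U, hUV, hUo, hxU⟩ := mem_nhds_iff.mp hV
    calc upperBaire flo x
        ≤ ⨆ y ∈ U, flo y := iInf₂_le U (hUo.mem_nhds hxU)
      _ ≤ ⨆ y ∈ V, glo y := by
          refine iSup₂_le fun y hy => ?_
          -- use lower semicontinuity of flo and density of D
          rw [← congrFun hfI y]
          refine iSup₂_le fun W hW => ?_
          obtain ⟨U', hU'W, hU'o, hyU'⟩ := mem_nhds_iff.mp (Filter.inter_mem (hUo.mem_nhds hy) hW)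
          obtain ⟨d, hdD, hdU'⟩ := hD.exists_mem_open hU'o ⟨y, hyU'⟩
          calc (⨅ z ∈ W, flo z) ≤ flo d := iInf₂_le d (hU'W hdU').2
            _ ≤ glo d := h d hdD
            _ ≤ ⨆ z ∈ V, glo z :=
                le_iSup₂ (f := fun z (_ : z ∈ V) => glo z) d (hUV (hU'W hdU').1)
  -- Step 2: flo ≤ glo everywhere, via flo = I(fhi) ≤ I(ghi) = glo.
  intro x
  refine ⟨?_, hhi x⟩
  rw [← hf.lowerBaire_hi, ← hg.lowerBaire_hi]
  exact lowerBaire_mono' hhi x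
end

section
/- Let Ω ⊆ ℝⁿ be a nonempty open set and let f = (f̲, f̄) and g = (g̲, ḡ) be Hausdorff-continuous interval-valued functions on Ω. If D ⊆ Ω is dense in Ω and f̄(x) ≤ ḡ(x) for every x ∈ D, then f ≤ g on all of Ω, i.e. f̲(x) ≤ g̲(x) and f̄(x) ≤ ḡ(x) for every x ∈ Ω. -/
open Filter Topology

section Aux

variable {X : Type*} [TopologicalSpace X] {g h : X → EReal} {x : X}

lemma lb_le_self : lowerBaire g x ≤ g x :=
  iSup₂_le fun _ hV => iInf₂_le x (mem_of_mem_nhds hV)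

lemma self_le_ub : g x ≤ upperBaire g x :=
  le_iInf₂ fun V hV => le_iSup₂ (f := fun y (_ : y ∈ V) => g y) x (mem_of_mem_nhds hV)

lemma lb_mono (hgh : ∀ y, g y ≤ h y) : lowerBaire g x ≤ lowerBaire h x :=
  iSup₂_mono fun _ _ => iInf₂_mono fun y _ => hgh y

lemma ub_mono (hgh : ∀ y, g y ≤ h y) : upperBaire g x ≤ upperBaire h x :=
  iInf₂_mono fun _ _ => iSup₂_mono fun y _ => hgh y

lemma lb_idem : lowerBaire (lowerBaire g) = lowerBaire g := by
  funext x
  apply le_antisymm lb_le_self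
  refine iSup₂_le fun V hV => ?_
  obtain ⟨U, hUV, hUo, hxU⟩ := mem_nhds_iff.mp hV
  refine le_trans ?_ (le_iSup₂ (f := fun W (_ : W ∈ nhds x) => ⨅ y ∈ W, lowerBaire g y) U
    (hUo.mem_nhds hxU))
  refine le_iInf₂ fun y hy => ?_
  exact le_trans (biInf_mono fun z hz => hUV hz)
    (le_iSup₂ (f := fun W (_ : W ∈ nhds y) => ⨅ z ∈ W, g z) U (hUo.mem_nhds hy))

lemma ub_idem : upperBaire (upperBaire g) = upperBaire g := by
  funext x
  apply le_antisymm _ self_le_ub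
  refine le_iInf₂ fun V hV => ?_
  obtain ⟨U, hUV, hUo, hxU⟩ := mem_nhds_iff.mp hV
  refine le_trans (iInf₂_le (f := fun W (_ : W ∈ nhds x) => ⨆ y ∈ W, upperBaire g y) U
    (hUo.mem_nhds hxU)) ?_
  refine iSup₂_le fun y hy => ?_
  exact le_trans (iInf₂_le (f := fun W (_ : W ∈ nhds y) => ⨆ z ∈ W, g z) U (hUo.mem_nhds hy))
    (biSup_mono fun z hz => hUV hz)

lemma lb_le_ub_of_dense {D : Set X} (hD : Dense D) (hle : ∀ y ∈ D, g y ≤ h y) :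
    lowerBaire g x ≤ upperBaire h x := by
  refine iSup₂_le fun V hV => le_iInf₂ fun W hW => ?_
  obtain ⟨y, hyVW, hyD⟩ := mem_closure_iff_nhds.mp (hD x) (V ∩ W) (Filter.inter_mem hV hW)
  calc ⨅ z ∈ V, g z ≤ g y := iInf₂_le y hyVW.1
    _ ≤ h y := hle y hyD
    _ ≤ ⨆ z ∈ W, h z := le_iSup₂ (f := fun z (_ : z ∈ W) => h z) y hyVW.2

lemma hcont_lb_hi {lo hi : X → EReal} (hf : IsHCont lo hi) : lowerBaire hi = lo :=
  (hf.2 (lowerBaire hi) hi ⟨fun _ => lb_le_self, lb_idem, hf.1.2.2⟩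
    (fun x => by rw [← hf.1.2.1]; exact lb_mono hf.1.1) (fun _ => le_rfl)).1

lemma hcont_ub_lo {lo hi : X → EReal} (hf : IsHCont lo hi) : upperBaire lo = hi :=
  (hf.2 lo (upperBaire lo) ⟨fun _ => self_le_ub, hf.1.2.1, ub_idem⟩
    (fun _ => le_rfl) (fun x => by rw [← hf.1.2.2]; exact ub_mono hf.1.1)).2

end Aux

/-- Theorem A1 b): if two Hausdorff-continuous interval-valued functions on a nonempty
open set Ω ⊆ ℝⁿ satisfy f̄ ≤ ḡ on a dense subset, then f ≤ g on all of Ω. -/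
theorem hcont_le_of_upper_le_on_dense {n : ℕ} (Ω : Set (Fin n → ℝ))
    (hΩ : IsOpen Ω) (hne : Ω.Nonempty)
    (flo fhi glo ghi : ↥Ω → EReal)
    (hf : IsHCont flo fhi) (hg : IsHCont glo ghi)
    (D : Set ↥Ω) (hD : Dense D)
    (h : ∀ x ∈ D, fhi x ≤ ghi x) :
    ∀ x : ↥Ω, flo x ≤ glo x ∧ fhi x ≤ ghi x := by
  have key : ∀ x, flo x ≤ ghi x := fun x => by
    rw [← hcont_lb_hi hf, ← hg.1.2.2]
    exact lb_le_ub_of_dense hD h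
  have hhi : ∀ x, fhi x ≤ ghi x := fun x => by
    rw [← hcont_ub_lo hf, ← hg.1.2.2]
    exact ub_mono key
  have hlo : ∀ x, flo x ≤ glo x := fun x => by
    rw [← hcont_lb_hi hf, ← hcont_lb_hi hg]
    exact lb_mono hhi
  exact fun x => ⟨hlo x, hhi x⟩
end
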